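/- arXiv:2408.02916 — 3 statements merged into one kernel-verified Lean document; each statement's English description precedes it below -/
import Mathlib

section
/- Let C ⊆ F_2^n be a binary linear code generated by the rows of a triorthogonal matrix G. Then the Schur square of C satisfies C^{⋆2} ⊆ C + C^⊥. -/
open Matrix

/-- A binary matrix is triorthogonal if every Schur (coordinatewise) product of two
distinct rows and of three pairwise distinct rows has even Hamming weight. -/
def Triorthogonal {m n : ℕ} (G : Matrix (Fin m) (Fin n) (ZMod 2)) : Prop :=
  (∀ i j : Fin m, i ≠ j → Even (hammingNorm (G i * G j))) ∧
  (∀ i j k : Fin m, i ≠ j → i ≠ k → j ≠ k → Even (hammingNorm (G i * G j * G k)))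

/-- The Schur square `C^{⋆2}` of a binary linear code. -/
def schurSquare {n : ℕ} (C : Submodule (ZMod 2) (Fin n → ZMod 2)) :
    Submodule (ZMod 2) (Fin n → ZMod 2) :=
  Submodule.span (ZMod 2) {x | ∃ c ∈ C, ∃ c' ∈ C, x = c * c'}

/-- The dual code `C^⊥`. -/
def dualCode {n : ℕ} (C : Submodule (ZMod 2) (Fin n → ZMod 2)) :
    Submodule (ZMod 2) (Fin n → ZMod 2) where
  carrier := {u | ∀ c ∈ C, dotProduct u c = 0}
  add_mem' := by
    intro a b ha hb c hc
    simp [add_dotProduct, ha c hc, hb c hc]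
  zero_mem' := by
    intro c hc
    simp
  smul_mem' := by
    intro r a ha c hc
    simp [smul_dotProduct, ha c hc]

/-- A binary code is triorthogonal if it has a triorthogonal generator matrix
(whose number of rows equals the dimension of the code). -/
def IsTriorthogonalCode {n : ℕ} (C : Submodule (ZMod 2) (Fin n → ZMod 2)) : Prop :=
  ∃ (m : ℕ) (G : Matrix (Fin m) (Fin n) (ZMod 2)), Triorthogonal G ∧
    Submodule.span (ZMod 2) (Set.range fun i => G i) = C ∧
    m = Module.finrank (ZMod 2) C

/-! Over `𝔽₂` every vector is Schur-idempotent, so the product of a row of `G` with itself is again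
that row, while the product of two distinct rows `g_i ⋆ g_j` pairs with each row `g_k` to
`wt(g_i ⋆ g_j ⋆ g_k) mod 2`. This is even by triorthogonality when `k ∉ {i, j}`, and by
idempotence plus the pairwise condition when `k ∈ {i, j}`; hence `g_i ⋆ g_j ∈ C^⊥`. Since `C^{⋆2}`
is spanned by the products of pairs of rows, this gives `C^{⋆2} ⊆ C + C^⊥`. -/

section BinaryVectors

variable {ι : Type*}

lemma ZMod.two_vector_mul_self (v : ι → ZMod 2) : v * v = v :=
  funext fun i => by simpa [sq] using ZMod.pow_card (v i)

lemma ZMod.two_sum_eq_hammingNorm [Fintype ι] (v : ι → ZMod 2) :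
    ∑ i, v i = (hammingNorm v : ZMod 2) := by
  rw [hammingNorm, Finset.natCast_card_filter]
  refine Finset.sum_congr rfl fun i _ => ?_
  generalize v i = a
  revert a
  decide

lemma ZMod.two_sum_eq_zero_of_even_hammingNorm [Fintype ι] {v : ι → ZMod 2}
    (h : Even (hammingNorm v)) : ∑ i, v i = 0 := by
  rwa [ZMod.two_sum_eq_hammingNorm, ZMod.natCast_eq_zero_iff_even]

end BinaryVectors

lemma mem_dualCode_span_iff {n : ℕ} {S : Set (Fin n → ZMod 2)} {u : Fin n → ZMod 2} :
    u ∈ dualCode (Submodule.span (ZMod 2) S) ↔ ∀ s ∈ S, u ⬝ᵥ s = 0 := by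
  refine ⟨fun hu s hs => hu s (Submodule.subset_span hs), fun hS c hc => ?_⟩
  induction hc using Submodule.span_induction with
  | mem s hs => exact hS s hs
  | zero => exact dotProduct_zero u
  | add x y _ _ hx hy => rw [dotProduct_add, hx, hy, add_zero]
  | smul r x _ hx => rw [dotProduct_smul, hx, smul_zero]

open scoped Pointwise in
lemma schurSquare_span {n : ℕ} (S : Set (Fin n → ZMod 2)) :
    schurSquare (Submodule.span (ZMod 2) S) = Submodule.span (ZMod 2) (S * S) := by
  rw [← Submodule.span_mul_span, Submodule.mul_eq_span_mul_set, schurSquare]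
  congr 1
  ext x
  simp only [Set.mem_ofPred_eq, Set.mem_mul, SetLike.mem_coe, eq_comm]

namespace Triorthogonal

variable {m n : ℕ} {G : Matrix (Fin m) (Fin n) (ZMod 2)}

lemma even_hammingNorm_mul_mul (hG : Triorthogonal G) {i j : Fin m} (hij : i ≠ j) (k : Fin m) :
    Even (hammingNorm (G i * G j * G k)) := by
  rcases eq_or_ne k i with rfl | hik
  · rw [mul_right_comm, ZMod.two_vector_mul_self]
    exact hG.1 _ _ hij
  rcases eq_or_ne k j with rfl | hjk
  · rw [mul_assoc, ZMod.two_vector_mul_self]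
    exact hG.1 _ _ hij
  exact hG.2 i j k hij hik.symm hjk.symm

lemma mul_mem_dualCode (hG : Triorthogonal G) {i j : Fin m} (hij : i ≠ j) :
    G i * G j ∈ dualCode (Submodule.span (ZMod 2) (Set.range fun k => G k)) := by
  rw [mem_dualCode_span_iff]
  rintro _ ⟨k, rfl⟩
  exact ZMod.two_sum_eq_zero_of_even_hammingNorm (hG.even_hammingNorm_mul_mul hij k)

end Triorthogonal

theorem stmt3 {m n : ℕ} (G : Matrix (Fin m) (Fin n) (ZMod 2))
    (C : Submodule (ZMod 2) (Fin n → ZMod 2))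
    (hG : Triorthogonal G)
    (hspan : Submodule.span (ZMod 2) (Set.range fun i => G i) = C) :
    schurSquare C ≤ C ⊔ dualCode C := by
  subst hspan
  rw [schurSquare_span, Submodule.span_le]
  rintro _ ⟨_, ⟨i, rfl⟩, _, ⟨j, rfl⟩, rfl⟩
  change G i * G j ∈ _
  rcases eq_or_ne i j with rfl | hij
  · rw [ZMod.two_vector_mul_self]
    exact Submodule.mem_sup_left (Submodule.subset_span ⟨i, rfl⟩)
  · exact Submodule.mem_sup_right (hG.mul_mem_dualCode hij)
end

section
/- Let G be a triorthogonal matrix over F_2 whose rows are g_1, ..., g_m with the first k_1 rows of odd weight and the rest of even weight, and let M be a nonsingular m × m matrix over F_2 of block form M = [[P, M_2],[0, M_4]] where P is a k_1 × k_1 permutation matrix, M_4 is nonsingular of size k_0 × k_0, and M_2 is arbitrary of size k_1 × k_0. Then MG is a triorthogonal matrix. -/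
open Matrix

/-- A permutation matrix. -/
def IsPermMatrix {k : ℕ} (P : Matrix (Fin k) (Fin k) (ZMod 2)) : Prop :=
  ∃ σ : Equiv.Perm (Fin k), ∀ i j, P i j = if σ i = j then 1 else 0

/-!
Write `w p ∈ 𝔽₂` for the weight parity of row `p` of `G`. Since `a * a = a` in `𝔽₂`,
triorthogonality of `G` says that `∑ₜ G p t * G q t = δ_pq w p` and
`∑ₜ G p t * G q t * G r t = δ_pqr w p`. Expanding the rows of `M * G`, the weight parity of the
Schur product of rows `i, j` (resp. `i, j, k`) of `M * G` is therefore `∑ₚ M i p * M j p * w p`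
(resp. with an extra factor `M k p`). Rows of odd weight lie among the first `k₁`, and there
the columns of `M` are columns of a permutation matrix padded by zeros, so `M i p * M j p = 0`
whenever `i ≠ j` and `w p ≠ 0`.
-/

open Finset

theorem ZMod.mul_self_eq_self (a : ZMod 2) : a * a = a := by
  revert a; decide

theorem cast_hammingNorm_eq_sum {ι : Type*} [Fintype ι] (x : ι → ZMod 2) :
    (hammingNorm x : ZMod 2) = ∑ t, x t := by
  have hx : ∀ t, x t = if x t ≠ 0 then 1 else 0 := by
    intro t; generalize x t = a; revert a; decide
  conv_rhs => arg 2; ext t; rw [hx t]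
  rw [sum_boole, hammingNorm]

theorem even_hammingNorm_iff_sum_eq_zero {ι : Type*} [Fintype ι] (x : ι → ZMod 2) :
    Even (hammingNorm x) ↔ ∑ t, x t = 0 := by
  rw [← ZMod.natCast_eq_zero_iff_even, cast_hammingNorm_eq_sum]

theorem Fintype.sum_mul_sum_mul_sum {κ R : Type*} [Fintype κ] [CommSemiring R] (f g h : κ → R) :
    (∑ p, f p) * (∑ q, g q) * (∑ r, h r) = ∑ p, ∑ q, ∑ r, f p * g q * h r := by
  rw [Fintype.sum_mul_sum, sum_mul]
  simp_rw [sum_mul, mul_sum]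

section MatrixRows

variable {ι κ τ R : Type*} [Fintype κ] [Fintype τ] [CommSemiring R]

theorem Matrix.sum_mul_apply_mul_mul_apply (M : Matrix ι κ R) (G : Matrix κ τ R) (i j : ι) :
    ∑ t, (M * G) i t * (M * G) j t = ∑ p, ∑ q, M i p * M j q * ∑ t, G p t * G q t := by
  simp only [Matrix.mul_apply, Fintype.sum_mul_sum]
  simp only [sum_comm (s := (univ : Finset τ)), mul_sum]
  congr! 3
  ring

theorem Matrix.sum_mul_apply_mul_mul_apply_mul_mul_apply (M : Matrix ι κ R) (G : Matrix κ τ R)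
    (i j k : ι) :
    ∑ t, (M * G) i t * (M * G) j t * (M * G) k t =
      ∑ p, ∑ q, ∑ r, M i p * M j q * M k r * ∑ t, G p t * G q t * G r t := by
  simp only [Matrix.mul_apply, Fintype.sum_mul_sum_mul_sum]
  simp only [sum_comm (s := (univ : Finset τ)), mul_sum]
  congr! 4
  ring

end MatrixRows

namespace Triorthogonal

variable {m n : ℕ} {G : Matrix (Fin m) (Fin n) (ZMod 2)}

theorem sum_mul_eq (hG : Triorthogonal G) (p q : Fin m) :
    ∑ t, G p t * G q t = if p = q then (hammingNorm (G p) : ZMod 2) else 0 := by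
  split_ifs with hpq
  · simp only [hpq, ZMod.mul_self_eq_self, cast_hammingNorm_eq_sum]
  · exact (even_hammingNorm_iff_sum_eq_zero _).mp (hG.1 p q hpq)

theorem sum_mul_mul_eq (hG : Triorthogonal G) (p q r : Fin m) :
    ∑ t, G p t * G q t * G r t =
      if p = q ∧ q = r then (hammingNorm (G p) : ZMod 2) else 0 := by
  by_cases hpq : p = q
  · subst hpq
    simp only [ZMod.mul_self_eq_self, hG.sum_mul_eq, true_and]
  rw [if_neg fun h => hpq h.1]
  by_cases hqr : q = r
  · subst hqr
    simpa only [mul_assoc, ZMod.mul_self_eq_self, if_neg hpq] using hG.sum_mul_eq p q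
  by_cases hpr : p = r
  · subst hpr
    simpa only [mul_right_comm _ (G q _), ZMod.mul_self_eq_self, if_neg hpq] using hG.sum_mul_eq p q
  exact (even_hammingNorm_iff_sum_eq_zero _).mp (hG.2 p q r hpq hpr hqr)

theorem mul {m' : ℕ} (hG : Triorthogonal G) (M : Matrix (Fin m') (Fin m) (ZMod 2))
    (hM : ∀ p, Odd (hammingNorm (G p)) → ∀ i j, i ≠ j → M i p * M j p = 0) :
    Triorthogonal (M * G) := by
  have hterm : ∀ i j, i ≠ j → ∀ p, M i p * M j p * (hammingNorm (G p) : ZMod 2) = 0 := by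
    intro i j hij p
    rcases Nat.even_or_odd (hammingNorm (G p)) with h | h
    · rw [ZMod.natCast_eq_zero_iff_even.mpr h, mul_zero]
    · rw [hM p h i j hij, zero_mul]
  refine ⟨fun i j hij => ?_, fun i j k hij _ _ => ?_⟩
  · rw [even_hammingNorm_iff_sum_eq_zero]
    simp only [Pi.mul_apply, Matrix.sum_mul_apply_mul_mul_apply, hG.sum_mul_eq, mul_ite,
      mul_zero, Fintype.sum_ite_eq]
    exact sum_eq_zero fun p _ => hterm i j hij p
  · rw [even_hammingNorm_iff_sum_eq_zero]
    simp only [Pi.mul_apply, Matrix.sum_mul_apply_mul_mul_apply_mul_mul_apply, hG.sum_mul_mul_eq,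
      ite_and, mul_ite, mul_zero, sum_ite_irrel, sum_const_zero, Fintype.sum_ite_eq]
    exact sum_eq_zero fun p _ => by rw [mul_right_comm, hterm i j hij p, zero_mul]

end Triorthogonal

theorem IsPermMatrix.fromBlocks_apply_inl_mul_eq_zero {k1 k0 : ℕ}
    {P : Matrix (Fin k1) (Fin k1) (ZMod 2)} (hP : IsPermMatrix P)
    (M2 : Matrix (Fin k1) (Fin k0) (ZMod 2)) (M4 : Matrix (Fin k0) (Fin k0) (ZMod 2))
    (b : Fin k1) {x y : Fin k1 ⊕ Fin k0} (hxy : x ≠ y) :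
    fromBlocks P M2 0 M4 x (Sum.inl b) * fromBlocks P M2 0 M4 y (Sum.inl b) = 0 := by
  obtain ⟨σ, hσ⟩ := hP
  rcases x with c | c <;> rcases y with d | d <;>
    simp only [fromBlocks_apply₁₁, fromBlocks_apply₂₁, Matrix.zero_apply, zero_mul, mul_zero]
  have hcd : σ c ≠ σ d := σ.injective.ne fun h => hxy (congrArg Sum.inl h)
  rw [hσ, hσ]
  by_cases hc : σ c = b
  · subst hc
    rw [if_neg hcd.symm, mul_zero]
  · rw [if_neg hc, zero_mul]

theorem stmt9_general {k1 k0 n : ℕ} (G : Matrix (Fin (k1 + k0)) (Fin n) (ZMod 2))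
    (hG : Triorthogonal G)
    (heven : ∀ i : Fin (k1 + k0), k1 ≤ (i : ℕ) → Even (hammingNorm (G i)))
    (P : Matrix (Fin k1) (Fin k1) (ZMod 2)) (hP : IsPermMatrix P)
    (M2 : Matrix (Fin k1) (Fin k0) (ZMod 2))
    (M4 : Matrix (Fin k0) (Fin k0) (ZMod 2))
    (M : Matrix (Fin (k1 + k0)) (Fin (k1 + k0)) (ZMod 2))
    (hM : M = Matrix.reindex finSumFinEquiv finSumFinEquiv (Matrix.fromBlocks P M2 0 M4)) :
    Triorthogonal (M * G) := by
  refine hG.mul M fun p hp i j hij => ?_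
  have hp1 : (p : ℕ) < k1 := by
    by_contra h
    exact Nat.not_even_iff_odd.mpr hp (heven p (not_lt.mp h))
  obtain ⟨b, rfl⟩ : ∃ b, finSumFinEquiv (Sum.inl b) = p := ⟨⟨p, hp1⟩, Fin.ext rfl⟩
  subst hM
  simp only [reindex_apply, submatrix_apply, Equiv.symm_apply_apply]
  exact hP.fromBlocks_apply_inl_mul_eq_zero M2 M4 b (finSumFinEquiv.symm.injective.ne hij)

theorem stmt9 {k1 k0 n : ℕ} (G : Matrix (Fin (k1 + k0)) (Fin n) (ZMod 2))
    (hG : Triorthogonal G)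
    (hodd : ∀ i : Fin (k1 + k0), (i : ℕ) < k1 → Odd (hammingNorm (G i)))
    (heven : ∀ i : Fin (k1 + k0), k1 ≤ (i : ℕ) → Even (hammingNorm (G i)))
    (hhull : Submodule.span (ZMod 2) {x | ∃ i : Fin (k1 + k0), k1 ≤ (i : ℕ) ∧ x = G i} =
      (Submodule.span (ZMod 2) (Set.range fun i => G i)) ⊓
        dualCode (Submodule.span (ZMod 2) (Set.range fun i => G i)))
    (P : Matrix (Fin k1) (Fin k1) (ZMod 2)) (hP : IsPermMatrix P)
    (M2 : Matrix (Fin k1) (Fin k0) (ZMod 2))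
    (M4 : Matrix (Fin k0) (Fin k0) (ZMod 2)) (hM4 : IsUnit M4.det)
    (M : Matrix (Fin (k1 + k0)) (Fin (k1 + k0)) (ZMod 2))
    (hM : M = Matrix.reindex finSumFinEquiv finSumFinEquiv (Matrix.fromBlocks P M2 0 M4)) :
    Triorthogonal (M * G) :=
  stmt9_general G hG heven P hP M2 M4 M hM
end

section
/- If g_1, ..., g_n are the rows of a nonsingular triorthogonal n × n matrix over F_2, then g_i ⋆ g_j = 0 for all i ≠ j. -/
open Matrix

lemma zmod2_mul_self : ∀ a : ZMod 2, a * a = a := by decide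

lemma sum_eq_hammingNorm {n : ℕ} (x : Fin n → ZMod 2) :
    ∑ t, x t = (hammingNorm x : ZMod 2) := by
  rw [hammingNorm, Finset.card_eq_sum_ones, Nat.cast_sum]
  rw [← Finset.sum_filter_add_sum_filter_not Finset.univ (fun t => x t ≠ 0)]
  have h1 : ∑ t ∈ Finset.univ.filter (fun t => ¬ x t ≠ 0), x t = 0 := by
    apply Finset.sum_eq_zero; intro t ht; simpa using (Finset.mem_filter.mp ht).2
  rw [h1, add_zero]
  apply Finset.sum_congr rfl
  intro t ht
  have h0 : x t ≠ 0 := (Finset.mem_filter.mp ht).2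
  have hall : ∀ a : ZMod 2, a ≠ 0 → a = 1 := by decide
  have : x t = 1 := hall _ h0
  simp [this]

lemma even_sum_zero {n : ℕ} (x : Fin n → ZMod 2) (h : Even (hammingNorm x)) :
    ∑ t, x t = 0 := by
  rw [sum_eq_hammingNorm]
  obtain ⟨k, hk⟩ := h
  rw [hk, Nat.cast_add, ← two_mul]
  have h2 : (2 : ZMod 2) = 0 := by decide
  rw [h2, zero_mul]


theorem stmt14 {n : ℕ} (G : Matrix (Fin n) (Fin n) (ZMod 2))
    (hns : IsUnit G.det) (hG : Triorthogonal G) :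
    ∀ i j : Fin n, i ≠ j → G i * G j = 0 := by
  intro i j hij
  set u := G i * G j with hu
  have h : G *ᵥ u = 0 := by
    funext k
    show dotProduct (G k) u = 0
    rw [dotProduct]
    by_cases hki : k = i
    · subst hki
      have : ∀ t, G k t * u t = (G k * G j) t := by
        intro t; simp [hu, Pi.mul_apply, ← mul_assoc, zmod2_mul_self _]
      rw [Finset.sum_congr rfl (fun t _ => this t)]
      exact even_sum_zero _ (hG.1 k j hij)
    · by_cases hkj : k = j
      · subst hkj
        have : ∀ t, G k t * u t = (G i * G k) t := by
          intro t; simp only [hu, Pi.mul_apply]; rw [mul_left_comm, zmod2_mul_self _]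
        rw [Finset.sum_congr rfl (fun t _ => this t)]
        exact even_sum_zero _ (hG.1 i k hij)
      · have : ∀ t, G k t * u t = (G i * G j * G k) t := by
          intro t; simp [hu, Pi.mul_apply]; ring
        rw [Finset.sum_congr rfl (fun t _ => this t)]
        exact even_sum_zero _ (hG.2 i j k hij (Ne.symm hki) (Ne.symm hkj))
  letI := G.invertibleOfIsUnitDet hns
  calc u = ⅟G *ᵥ (G *ᵥ u) := by rw [Matrix.mulVec_mulVec, invOf_mul_self, Matrix.one_mulVec]
    _ = 0 := by rw [h, Matrix.mulVec_zero]
end
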